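/- arXiv:1204.1298 — 4 statements merged into one kernel-verified Lean document; each statement's English description precedes it below -/
import Mathlib

section
/- Let a be a nonzero integral ideal of O_K with a⁻¹ = (1/k)·b where k is the minimal positive integer such that k·a⁻¹ is integral and b = k·a⁻¹ ⊆ O_K. Then k ≤ N(a) and N(b) ≤ N(a)^(d-1), where d is the degree of K over Q. -/
open scoped nonZeroDivisors
open NumberField FractionalIdeal

/-! Since `N(a) ∈ a`, the integer `N(a)` clears the denominators of `a⁻¹`, so `k ≤ N(a)` by
minimality of `k`. Moreover `b * a = (k)`, and taking norms gives `N(b) N(a) = k ^ d ≤ N(a) ^ d`. -/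

section FractionalIdeal

variable {R K : Type*} [CommRing R] [IsDomain R] [Field K] [Algebra R K] [IsFractionRing R K]

theorem FractionalIdeal.spanSingleton_mul_inv_le_one_of_mem {I : Ideal R} {x : R} (hx : x ∈ I) :
    spanSingleton R⁰ (algebraMap R K x) * (I : FractionalIdeal R⁰ K)⁻¹ ≤ 1 :=
  calc spanSingleton R⁰ (algebraMap R K x) * (I : FractionalIdeal R⁰ K)⁻¹
      ≤ I * (I : FractionalIdeal R⁰ K)⁻¹ :=
        mul_le_mul_left (spanSingleton_le_iff_mem.2 ((mem_coeIdeal _).2 ⟨x, hx, rfl⟩)) _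
    _ ≤ 1 := mul_one_div_le_one

end FractionalIdeal

section Dedekind

variable {R K : Type*} [CommRing R] [IsDedekindDomain R] [Field K] [Algebra R K]
  [IsFractionRing R K]

theorem Ideal.mul_eq_span_singleton_of_coeIdeal_eq {I J : Ideal R} (hI : I ≠ 0) {x : R}
    (hJ : (J : FractionalIdeal R⁰ K) =
      spanSingleton R⁰ (algebraMap R K x) * (I : FractionalIdeal R⁰ K)⁻¹) :
    J * I = Ideal.span {x} := by
  apply coeIdeal_injective (K := K)
  change ((J * I : Ideal R) : FractionalIdeal R⁰ K) = Ideal.span {x}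
  rw [coeIdeal_mul, hJ, mul_assoc, inv_mul_cancel₀ (coeIdeal_ne_zero.2 hI), mul_one,
    coeIdeal_span_singleton]

end Dedekind

theorem stmt_3_general (K : Type*) [Field K] [NumberField K]
    (a : Ideal (𝓞 K)) (ha : a ≠ 0) (k : ℕ)
    (hmin : ∀ m : ℕ, 0 < m →
      spanSingleton (𝓞 K)⁰ (m : K) * (a : FractionalIdeal (𝓞 K)⁰ K)⁻¹ ≤ 1 → k ≤ m)
    (b : Ideal (𝓞 K))
    (hb : (b : FractionalIdeal (𝓞 K)⁰ K) =
      spanSingleton (𝓞 K)⁰ (k : K) * (a : FractionalIdeal (𝓞 K)⁰ K)⁻¹) :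
    k ≤ Ideal.absNorm a ∧
      Ideal.absNorm b ≤ (Ideal.absNorm a) ^ (Module.finrank ℚ K - 1) := by
  have hNa : 0 < Ideal.absNorm a := Nat.pos_of_ne_zero (Ideal.absNorm_eq_zero_iff.not.2 ha)
  have hkNa : k ≤ Ideal.absNorm a := hmin _ hNa <| by
    simpa using spanSingleton_mul_inv_le_one_of_mem (K := K) a.absNorm_mem
  have hnorm : Ideal.absNorm b * Ideal.absNorm a = k ^ Module.finrank ℚ K := by
    rw [← map_mul, Ideal.mul_eq_span_singleton_of_coeIdeal_eq (K := K) (x := k) ha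
      (by rw [hb, map_natCast]), Ideal.absNorm_span_natCast, RingOfIntegers.rank]
  refine ⟨hkNa, Nat.le_of_mul_le_mul_right ?_ hNa⟩
  rw [hnorm, ← pow_succ, Nat.sub_add_cancel Module.finrank_pos]
  exact Nat.pow_le_pow_left hkNa _

/-- Let `a` be a nonzero integral ideal, `k` the minimal positive integer such that
`k · a⁻¹` is integral, and `b = k · a⁻¹ ⊆ 𝓞 K`.  Then `k ≤ N(a)` and
`N(b) ≤ N(a)^(d-1)` where `d = [K : ℚ]`. -/
theorem stmt_3 (K : Type*) [Field K] [NumberField K]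
    (a : Ideal (𝓞 K)) (ha : a ≠ 0) (k : ℕ) (hk : 0 < k)
    (hint : spanSingleton (𝓞 K)⁰ (k : K) * (a : FractionalIdeal (𝓞 K)⁰ K)⁻¹ ≤ 1)
    (hmin : ∀ m : ℕ, 0 < m →
      spanSingleton (𝓞 K)⁰ (m : K) * (a : FractionalIdeal (𝓞 K)⁰ K)⁻¹ ≤ 1 → k ≤ m)
    (b : Ideal (𝓞 K))
    (hb : (b : FractionalIdeal (𝓞 K)⁰ K) =
      spanSingleton (𝓞 K)⁰ (k : K) * (a : FractionalIdeal (𝓞 K)⁰ K)⁻¹) :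
    k ≤ Ideal.absNorm a ∧
      Ideal.absNorm b ≤ (Ideal.absNorm a) ^ (Module.finrank ℚ K - 1) :=
  stmt_3_general K a ha k hmin b hb
end

section
/- Let K be a number field of degree d and a a nonzero fractional ideal of O_K. Suppose r₁,…,r_d is a basis of a (as a Z-module) satisfying ‖r_j‖ ≤ 2^(d/2)·√d·N(a)^(1/d)·√|Δ_K| for all j. Then for any x ∈ K, writing x = Σⱼ xⱼ rⱼ with xⱼ ∈ Q and setting x̄ = x − Σⱼ ⌊xⱼ⌉ rⱼ (rounding each coefficient to a nearest integer), one has x − x̄ ∈ a and ‖x̄‖ ≤ d^(3/2)·2^(d/2)·N(a)^(1/d)·√|Δ_K|. -/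
/-!
Writing `x = Σ cⱼ rⱼ`, the remainder `x̄ = Σ (cⱼ - ⌊cⱼ⌉) rⱼ` has coefficients of absolute value at
most `1/2 ≤ 1`. The `T₂`-norm is the Euclidean norm of the vector of complex embeddings, so it is
subadditive and `ℚ`-homogeneous, whence `‖x̄‖ ≤ Σ ‖rⱼ‖ ≤ d · 2^(d/2) √d N(a)^(1/d) √|Δ_K|`,
and `d √d = d^(3/2)`.
-/

open scoped nonZeroDivisors
open NumberField FractionalIdeal

/-- The `T₂`-norm of an element of a number field. -/
noncomputable def T2 (K : Type*) [Field K] [NumberField K] (x : K) : ℝ :=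
  Real.sqrt (∑ σ : K →+* ℂ, ‖σ x‖ ^ 2)

namespace T2

variable {K : Type*} [Field K] [NumberField K]

noncomputable def toEuclidean : K →+ EuclideanSpace ℂ (K →+* ℂ) where
  toFun x := WithLp.toLp 2 fun σ => σ x
  map_zero' := by ext; simp
  map_add' x y := by ext; simp

theorem eq_norm_toEuclidean (x : K) : T2 K x = ‖toEuclidean x‖ := by
  rw [EuclideanSpace.norm_eq, T2]
  rfl

theorem nonneg (x : K) : 0 ≤ T2 K x :=
  Real.sqrt_nonneg _

theorem sum_le {ι : Type*} (s : Finset ι) (f : ι → K) :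
    T2 K (∑ i ∈ s, f i) ≤ ∑ i ∈ s, T2 K (f i) := by
  simpa only [eq_norm_toEuclidean, map_sum] using norm_sum_le s fun i => toEuclidean (f i)

theorem ratCast_mul (q : ℚ) (y : K) : T2 K (q * y) = |(q : ℝ)| * T2 K y := by
  have hsmul : toEuclidean ((q : K) * y) = (q : ℂ) • toEuclidean y := by
    ext σ
    simp [toEuclidean]
  rw [eq_norm_toEuclidean, eq_norm_toEuclidean, hsmul, norm_smul, ← Rat.cast_abs,
    Complex.norm_ratCast, Rat.cast_abs]

theorem sum_ratCast_mul_le {ι : Type*} [Fintype ι] (q : ι → ℚ) (hq : ∀ i, |q i| ≤ 1)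
    (r : ι → K) :
    T2 K (∑ i, (q i : K) * r i) ≤ ∑ i, T2 K (r i) :=
  (sum_le _ _).trans <| Finset.sum_le_sum fun i _ => by
    rw [ratCast_mul]
    exact mul_le_of_le_one_left (nonneg _) (mod_cast hq i)

end T2

theorem sub_sum_round_mul_eq_sum {K ι : Type*} [Field K] [CharZero K] [Fintype ι]
    (c : ι → ℚ) (r : ι → K) :
    ∑ i, (c i : K) * r i - ∑ i, ((round (c i) : ℤ) : K) * r i
      = ∑ i, ((c i - round (c i) : ℚ) : K) * r i := by
  rw [← Finset.sum_sub_distrib]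
  refine Finset.sum_congr rfl fun i _ => ?_
  push_cast
  ring

theorem abs_sub_round_le_one (q : ℚ) : |q - round q| ≤ 1 :=
  (abs_sub_round q).trans (by norm_num)

theorem mul_sqrt_self_eq_rpow {x : ℝ} (hx : 0 ≤ x) : x * √x = x ^ ((3 : ℝ) / 2) := by
  rw [Real.sqrt_eq_rpow, show (3 : ℝ) / 2 = 1 + 1 / 2 by norm_num,
    Real.rpow_add' hx (by norm_num), Real.rpow_one]

theorem stmt_7_general (K : Type*) [Field K] [NumberField K]
    (a : FractionalIdeal (𝓞 K)⁰ K)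
    (r : Fin (Module.finrank ℚ K) → K)
    (hmem : ∀ j, r j ∈ a)
    (hr : ∀ j, T2 K (r j) ≤
      (2 : ℝ) ^ ((Module.finrank ℚ K : ℝ) / 2) * Real.sqrt (Module.finrank ℚ K) *
        ((FractionalIdeal.absNorm a : ℝ) ^ ((1 : ℝ) / (Module.finrank ℚ K))) *
        Real.sqrt |(NumberField.discr K : ℝ)|)
    (x : K) (c : Fin (Module.finrank ℚ K) → ℚ)
    (hx : x = ∑ j, (c j : K) * r j) :
    x - (x - ∑ j, ((round (c j) : ℤ) : K) * r j) ∈ a ∧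
      T2 K (x - ∑ j, ((round (c j) : ℤ) : K) * r j) ≤
        (Module.finrank ℚ K : ℝ) ^ ((3 : ℝ) / 2) *
          (2 : ℝ) ^ ((Module.finrank ℚ K : ℝ) / 2) *
          ((FractionalIdeal.absNorm a : ℝ) ^ ((1 : ℝ) / (Module.finrank ℚ K))) *
          Real.sqrt |(NumberField.discr K : ℝ)| := by
  refine ⟨?_, ?_⟩
  · rw [sub_sub_cancel, ← FractionalIdeal.mem_coe]
    exact sum_mem fun j _ => by
      simpa only [zsmul_eq_mul] using zsmul_mem (FractionalIdeal.mem_coe.mpr (hmem j)) (round (c j))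
  · rw [hx, sub_sum_round_mul_eq_sum]
    calc _ ≤ ∑ j, T2 K (r j) := T2.sum_ratCast_mul_le _ (fun j => abs_sub_round_le_one _) r
      _ ≤ (Module.finrank ℚ K : ℝ) * ((2 : ℝ) ^ ((Module.finrank ℚ K : ℝ) / 2) *
            √(Module.finrank ℚ K) * ((absNorm a : ℝ) ^ ((1 : ℝ) / Module.finrank ℚ K)) *
            √|(discr K : ℝ)|) := by
          simpa using Finset.sum_le_card_nsmul Finset.univ _ _ fun j _ => hr j
      _ = _ := by
          rw [← mul_sqrt_self_eq_rpow (Nat.cast_nonneg _)]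
          ring

/-- Reduction modulo a fractional ideal:  if `r₁, …, r_d` is a basis of the
fractional ideal `a` with `‖r j‖ ≤ 2^(d/2) √d N(a)^(1/d) √|Δ_K|`, and
`x = Σ xⱼ rⱼ`, then `x̄ = x − Σ ⌊xⱼ⌉ rⱼ` satisfies `x − x̄ ∈ a` and
`‖x̄‖ ≤ d^(3/2) 2^(d/2) N(a)^(1/d) √|Δ_K|`. -/
theorem stmt_7 (K : Type*) [Field K] [NumberField K]
    (a : FractionalIdeal (𝓞 K)⁰ K) (ha : a ≠ 0)
    (r : Fin (Module.finrank ℚ K) → K)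
    (hmem : ∀ j, r j ∈ a)
    (hbasis : Submodule.span ℤ (Set.range r) = (a : Submodule (𝓞 K) K).restrictScalars ℤ)
    (hr : ∀ j, T2 K (r j) ≤
      (2 : ℝ) ^ ((Module.finrank ℚ K : ℝ) / 2) * Real.sqrt (Module.finrank ℚ K) *
        ((FractionalIdeal.absNorm a : ℝ) ^ ((1 : ℝ) / (Module.finrank ℚ K))) *
        Real.sqrt |(NumberField.discr K : ℝ)|)
    (x : K) (c : Fin (Module.finrank ℚ K) → ℚ)
    (hx : x = ∑ j, (c j : K) * r j) :
    x - (x - ∑ j, ((round (c j) : ℤ) : K) * r j) ∈ a ∧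
      T2 K (x - ∑ j, ((round (c j) : ℤ) : K) * r j) ≤
        (Module.finrank ℚ K : ℝ) ^ ((3 : ℝ) / 2) *
          (2 : ℝ) ^ ((Module.finrank ℚ K : ℝ) / 2) *
          ((FractionalIdeal.absNorm a : ℝ) ^ ((1 : ℝ) / (Module.finrank ℚ K))) *
          Real.sqrt |(NumberField.discr K : ℝ)| :=
  stmt_7_general K a r hmem hr x c hx
end

section
/- Let M ⊆ O_K^n be an O_K-module of rank n with determinantal ideal g(M). Then g(M)·O_K^n ⊆ M. -/
open scoped nonZeroDivisors
open NumberField FractionalIdeal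

/-- The `𝓞 K`-linear map `c ↦ c • v` from `K` to `K^n`. -/
noncomputable def smulVec (K : Type*) [Field K] [NumberField K] (n : ℕ)
    (v : Fin n → K) : K →ₗ[𝓞 K] (Fin n → K) where
  toFun c := c • v
  map_add' x y := by simp [add_smul]
  map_smul' r x := by simp [smul_assoc]

/-- The `𝓞 K`-module generated by a pseudo-generating set `[(Aᵢ), (aᵢ)]`. -/
noncomputable def pseudoModule (K : Type*) [Field K] [NumberField K] (n : ℕ)
    (A : Fin n → (Fin n → K)) (a : Fin n → FractionalIdeal (𝓞 K)⁰ K) :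
    Submodule (𝓞 K) (Fin n → K) :=
  ⨆ i, Submodule.map (smulVec K n (A i)) (a i : Submodule (𝓞 K) K)

open Matrix in
theorem key (K : Type*) [Field K] [NumberField K] (n : ℕ)
    (A : Fin n → (Fin n → K)) (a : Fin n → FractionalIdeal (𝓞 K)⁰ K)
    (hint : ∀ x ∈ pseudoModule K n A a, ∀ j, ∃ y : 𝓞 K, x j = algebraMap (𝓞 K) K y)
    (t : Fin n → K) (ht : ∀ i, t i ∈ a i) (v : Fin n → 𝓞 K) :
    ((Matrix.of A).det * ∏ i, t i) • (fun j => algebraMap (𝓞 K) K (v j))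
      ∈ pseudoModule K n A a := by
  classical
  have hw : ∀ j, t j • A j ∈ pseudoModule K n A a := fun j =>
    Submodule.mem_iSup_of_mem j ⟨t j, FractionalIdeal.mem_coe.mpr (ht j), rfl⟩
  choose B' hB' using fun j => hint _ (hw j)
  set B : Matrix (Fin n) (Fin n) (𝓞 K) := Matrix.of B' with hBdef
  set f := algebraMap (𝓞 K) K
  have hmap : B.map f = Matrix.diagonal t * Matrix.of A := by
    ext j k
    have := hB' j k
    simp only [Pi.smul_apply, smul_eq_mul] at this
    simp [hBdef, Matrix.map_apply, Matrix.diagonal_mul, ← this]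
  set vK : Fin n → K := fun j => f (v j) with hvK
  set u : Fin n → 𝓞 K := (B.adjugate)ᵀ *ᵥ v with hu
  set x : Fin n → K := fun i => t i * f (u i) with hx
  have hxi : ∀ i, x i ∈ (a i : Submodule (𝓞 K) K) := by
    intro i
    have : x i = u i • t i := by
      rw [hx, Algebra.smul_def, mul_comm]
    rw [this]
    exact Submodule.smul_mem _ _ (FractionalIdeal.mem_coe.mpr (ht i))
  set BK : Matrix (Fin n) (Fin n) K := Matrix.diagonal t * Matrix.of A with hBK
  have h1 : (fun i => f (u i)) = BKᵀ.adjugate *ᵥ vK := by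
    funext i
    rw [hu]
    rw [show f (((B.adjugate)ᵀ *ᵥ v) i) = ((B.adjugate)ᵀ.map f *ᵥ (f ∘ v)) i from
      RingHom.map_mulVec f _ v i]
    congr 1
    have hadj : B.adjugate.map ⇑f = BK.adjugate := by
      have h := RingHom.map_adjugate f B
      simpa [RingHom.mapMatrix_apply, hmap] using h
    rw [Matrix.transpose_map, hadj, Matrix.adjugate_transpose]
  have h2 : (∑ i, x i • A i) = ((Matrix.of A).det * ∏ i, t i) • vK := by
    have hxv : x = Matrix.diagonal t *ᵥ (fun i => f (u i)) := by
      funext i; rw [Matrix.mulVec_diagonal]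
    have step : (∑ i, x i • A i) = (Matrix.of A)ᵀ *ᵥ x := by
      funext k
      simp only [Finset.sum_apply, Pi.smul_apply, smul_eq_mul, Matrix.mulVec,
        dotProduct, Matrix.transpose_apply, Matrix.of_apply]
      exact Finset.sum_congr rfl fun i _ => mul_comm _ _
    rw [step, hxv, h1, Matrix.mulVec_mulVec, Matrix.mulVec_mulVec,
      show (Matrix.of A)ᵀ * Matrix.diagonal t = BKᵀ by
        rw [hBK, Matrix.transpose_mul, Matrix.diagonal_transpose],
      Matrix.mul_adjugate, Matrix.smul_mulVec, Matrix.one_mulVec,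
      Matrix.det_transpose, hBK, Matrix.det_mul, Matrix.det_diagonal, mul_comm]
  rw [← h2]
  exact Submodule.sum_mem _ fun i _ =>
    Submodule.mem_iSup_of_mem i ⟨x i, hxi i, rfl⟩

theorem ind (K : Type*) [Field K] [NumberField K] (n : ℕ)
    (A : Fin n → (Fin n → K)) (a : Fin n → FractionalIdeal (𝓞 K)⁰ K)
    (hint : ∀ x ∈ pseudoModule K n A a, ∀ j, ∃ y : 𝓞 K, x j = algebraMap (𝓞 K) K y)
    (s : Finset (Fin n)) :
    ∀ u ∈ (∏ i ∈ s, (a i : Submodule (𝓞 K) K)), ∀ t : Fin n → K, (∀ i, t i ∈ a i) →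
      ∀ v : Fin n → 𝓞 K,
      ((Matrix.of A).det * (u * ∏ i ∈ sᶜ, t i)) • (fun j => algebraMap (𝓞 K) K (v j))
        ∈ pseudoModule K n A a := by
  classical
  induction s using Finset.induction with
  | empty =>
    intro u hu t ht v
    rw [Finset.prod_empty] at hu
    obtain ⟨r, hr⟩ := Submodule.mem_one.mp hu
    have hsc : ((Matrix.of A).det * (u * ∏ i ∈ (∅ : Finset (Fin n))ᶜ, t i))
        = r • ((Matrix.of A).det * ∏ i, t i) := by
      rw [← hr, Finset.compl_empty, Algebra.smul_def]
      ring
    rw [hsc, smul_assoc]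
    exact Submodule.smul_mem _ r (key K n A a hint t ht v)
  | @insert j s hj ih =>
    intro u hu t ht v
    rw [Finset.prod_insert hj] at hu
    refine Submodule.mul_induction_on hu (fun x hx y hy => ?_) (fun x y hx hy => ?_)
    ·
      have hupd : ∀ i, Function.update t j x i ∈ a i := by
        intro i
        rcases eq_or_ne i j with rfl | hij
        · simpa using FractionalIdeal.mem_coe.mp hx
        · rw [Function.update_of_ne hij]; exact ht i
      have hprod : x * y * ∏ i ∈ (insert j s)ᶜ, t i
          = y * ∏ i ∈ sᶜ, Function.update t j x i := by
        have hjs : j ∈ sᶜ := Finset.mem_compl.mpr hj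
        have hins : sᶜ = insert j ((insert j s)ᶜ) := by
          rw [Finset.compl_insert, Finset.insert_erase hjs]
        rw [hins, Finset.prod_insert (by simp [Finset.compl_insert])]
        rw [Function.update_self]
        have : ∏ i ∈ (insert j s)ᶜ, Function.update t j x i
            = ∏ i ∈ (insert j s)ᶜ, t i := by
          refine Finset.prod_congr rfl fun i hi => ?_
          have : i ≠ j := by
            intro h; subst h; simp [Finset.compl_insert] at hi
          rw [Function.update_of_ne this]
        rw [this]; ring
      rw [hprod]
      exact ih y hy (Function.update t j x) hupd v
    · have : ((Matrix.of A).det * ((x + y) * ∏ i ∈ (insert j s)ᶜ, t i))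
          • (fun j => algebraMap (𝓞 K) K (v j))
          = ((Matrix.of A).det * (x * ∏ i ∈ (insert j s)ᶜ, t i))
            • (fun j => algebraMap (𝓞 K) K (v j))
          + ((Matrix.of A).det * (y * ∏ i ∈ (insert j s)ᶜ, t i))
            • (fun j => algebraMap (𝓞 K) K (v j)) := by
        rw [← add_smul]; ring_nf
      rw [this]
      exact add_mem hx hy

/-- If `M ⊆ 𝓞 K^n` is a rank-`n` module with pseudo-basis `[(Aᵢ), (aᵢ)]` and
determinantal ideal `g(M) = det(A)·a₁⋯a_n`, then `g(M)·𝓞 K^n ⊆ M`. -/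
theorem stmt_12 (K : Type*) [Field K] [NumberField K] (n : ℕ)
    (A : Fin n → (Fin n → K)) (a : Fin n → FractionalIdeal (𝓞 K)⁰ K)
    (ha : ∀ i, a i ≠ 0) (hA : (Matrix.of A).det ≠ 0)
    (hint : ∀ x ∈ pseudoModule K n A a, ∀ j, ∃ y : 𝓞 K, x j = algebraMap (𝓞 K) K y) :
    ∀ c ∈ spanSingleton (𝓞 K)⁰ (Matrix.of A).det * ∏ i, a i,
      ∀ v : Fin n → 𝓞 K,
        c • (fun j => algebraMap (𝓞 K) K (v j)) ∈ pseudoModule K n A a := by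
  classical
  intro c hc v
  have hc' : c ∈ (Submodule.span (𝓞 K) {(Matrix.of A).det}) *
      (∏ i, (a i : Submodule (𝓞 K) K)) := by
    have h1 : c ∈ (↑(spanSingleton (𝓞 K)⁰ (Matrix.of A).det * ∏ i, a i) :
        Submodule (𝓞 K) K) := FractionalIdeal.mem_coe.mpr hc
    rw [FractionalIdeal.coe_mul, FractionalIdeal.coe_spanSingleton] at h1
    have h2 := map_prod (coeSubmoduleHom (𝓞 K)⁰ K) a Finset.univ
    simp only [coeSubmoduleHom_apply] at h2
    rwa [h2] at h1
  refine Submodule.mul_induction_on hc' (fun e he u hu => ?_) (fun x y hx hy => ?_)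
  ·
    obtain ⟨r, hr⟩ := Submodule.mem_span_singleton.mp he
    have hscal : e * u = r • ((Matrix.of A).det * (u * ∏ i ∈ (Finset.univ :
        Finset (Fin n))ᶜ, (0 : Fin n → K) i)) := by
      rw [← hr, Finset.compl_univ, Finset.prod_empty, Algebra.smul_def, Algebra.smul_def]
      ring
    rw [hscal, smul_assoc]
    exact Submodule.smul_mem _ r
      (ind K n A a hint Finset.univ u hu 0 (fun i => (a i : Submodule (𝓞 K) K).zero_mem) v)
  · rw [add_smul]
    exact add_mem hx hy
end

section
/- Let K be a number field of degree d with discriminant Δ_K, a a nonzero integral ideal of O_K, k the denominator of a⁻¹, b = k·a⁻¹ ⊆ O_K, and α ∈ b a nonzero element with ‖α‖ ≤ √d·2^(d/2)·|Δ_K|^(1/(2d))·N(b)^(1/d). Then the integral ideal a' = (α/k)·a satisfies N(a') ≤ 2^(d²/2)·√|Δ_K|. -/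
/-!
Since `a' · b = (α/k) a · k a⁻¹ = (α)`, multiplicativity of the norm gives
`N(a') N(b) = |N(α)|`. AM–GM on the `|σ α|²` gives `|N(α)| ≤ (‖α‖/√d)^d`, and the assumed
bound on `‖α‖` turns the right-hand side into exactly `2^(d²/2) √|Δ_K| N(b)`;
dividing by `N(b) > 0` finishes.
-/

open scoped nonZeroDivisors
open NumberField FractionalIdeal

open Finset in
theorem Finset.prod_le_sum_div_card_pow {ι : Type*} (s : Finset ι) {z : ι → ℝ}
    (hz : ∀ i ∈ s, 0 ≤ z i) : ∏ i ∈ s, z i ≤ ((∑ i ∈ s, z i) / #s) ^ #s := by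
  rcases s.eq_empty_or_nonempty with rfl | hs
  · simp
  have hn : #s ≠ 0 := hs.card_pos.ne'
  have amgm := Real.geom_mean_le_arith_mean_weighted s (fun _ => ((#s : ℝ))⁻¹) z
    (fun _ _ => by positivity) (by simp [hn]) hz
  rw [Real.finsetProd_rpow s z hz, ← mul_sum, inv_mul_eq_div] at amgm
  calc ∏ i ∈ s, z i = ((∏ i ∈ s, z i) ^ ((#s : ℕ) : ℝ)⁻¹) ^ #s :=
        (Real.rpow_inv_natCast_pow (prod_nonneg hz) hn).symm
    _ ≤ ((∑ i ∈ s, z i) / #s) ^ #s :=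
        pow_le_pow_left₀ (Real.rpow_nonneg (prod_nonneg hz) _) amgm _

theorem T2_nonneg (K : Type*) [Field K] [NumberField K] (x : K) : 0 ≤ T2 K x :=
  Real.sqrt_nonneg _

theorem abs_algebraNorm_eq_prod_norm_embeddings (K : Type*) [Field K] [NumberField K] (x : K) :
    |(Algebra.norm ℚ x : ℝ)| = ∏ σ : K →+* ℂ, ‖σ x‖ := by
  have h := congr_arg (fun z : ℂ => ‖z‖) (Algebra.norm_eq_prod_embeddings ℚ ℂ x)
  rw [norm_prod] at h
  rw [Fintype.prod_equiv (RingHom.equivRatAlgHom _ _) (fun σ => ‖σ x‖)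
      (fun φ => ‖φ x‖) fun _ => by simp [RingHom.equivRatAlgHom_apply], ← h,
    eq_ratCast (algebraMap ℚ ℂ), ← Complex.ofReal_ratCast, Complex.norm_real, Real.norm_eq_abs]

theorem abs_algebraNorm_le_T2_div_sqrt_pow (K : Type*) [Field K] [NumberField K] (x : K) :
    |(Algebra.norm ℚ x : ℝ)| ≤ (T2 K x / √(Module.finrank ℚ K)) ^ Module.finrank ℚ K := by
  set d := Module.finrank ℚ K
  have hd : (0 : ℝ) < d := by exact_mod_cast Module.finrank_pos
  have hsq : |(Algebra.norm ℚ x : ℝ)| ^ 2 ≤ ((T2 K x / √d) ^ d) ^ 2 := calc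
    |(Algebra.norm ℚ x : ℝ)| ^ 2 = ∏ σ : K →+* ℂ, ‖σ x‖ ^ 2 := by
      rw [abs_algebraNorm_eq_prod_norm_embeddings, Finset.prod_pow]
    _ ≤ ((∑ σ : K →+* ℂ, ‖σ x‖ ^ 2) / d) ^ d := by
      simpa [NumberField.Embeddings.card K ℂ] using
        Finset.univ.prod_le_sum_div_card_pow (fun (σ : K →+* ℂ) _ => sq_nonneg ‖σ x‖)
    _ = ((T2 K x / √d) ^ d) ^ 2 := by
      rw [← pow_mul, mul_comm, pow_mul, T2, div_pow (√_), Real.sq_sqrt (by positivity),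
        Real.sq_sqrt hd.le]
  have hpos : 0 ≤ (T2 K x / √d) ^ d := by have := T2_nonneg K x; positivity
  exact (pow_le_pow_iff_left₀ (abs_nonneg _) hpos two_ne_zero).mp hsq

theorem FractionalIdeal.spanSingleton_div_mul_mul_spanSingleton_mul_inv {R K : Type*}
    [CommRing R] [IsDedekindDomain R] [Field K] [Algebra R K] [IsFractionRing R K]
    {I : FractionalIdeal R⁰ K} (hI : I ≠ 0) {k : K} (hk : k ≠ 0) (x : K) :
    spanSingleton R⁰ (x / k) * I * (spanSingleton R⁰ k * I⁻¹) = spanSingleton R⁰ x := by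
  rw [mul_mul_mul_comm, spanSingleton_mul_spanSingleton, div_mul_cancel₀ x hk,
    mul_inv_cancel₀ hI, mul_one]

theorem Ideal.absNorm_mul_absNorm_eq_abs_algebraNorm {K : Type*} [Field K] [NumberField K]
    {I J : Ideal (𝓞 K)} {x : K}
    (h : (I : FractionalIdeal (𝓞 K)⁰ K) * J = spanSingleton (𝓞 K)⁰ x) :
    (Ideal.absNorm I : ℚ) * Ideal.absNorm J = |Algebra.norm ℚ x| := by
  rw [← coeIdeal_absNorm (K := K), ← coeIdeal_absNorm (K := K), ← map_mul, h,
    FractionalIdeal.absNorm_span_singleton]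

theorem rpow_div_two_mul_rpow_one_div_mul_rpow_one_div_pow {d : ℕ} (hd : d ≠ 0) {Δ N : ℝ}
    (hΔ : 0 ≤ Δ) (hN : 0 ≤ N) :
    ((2 : ℝ) ^ ((d : ℝ) / 2) * Δ ^ ((1 : ℝ) / (2 * d)) * N ^ ((1 : ℝ) / d)) ^ d =
      (2 : ℝ) ^ ((d : ℝ) ^ 2 / 2) * √Δ * N := by
  rw [mul_pow, mul_pow, one_div (d : ℝ), Real.rpow_inv_natCast_pow hN hd, Real.sqrt_eq_rpow,
    ← Real.rpow_natCast, ← Real.rpow_natCast, ← Real.rpow_mul zero_le_two, ← Real.rpow_mul hΔ]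
  congr 3 <;> field_simp

theorem stmt_18_general (K : Type*) [Field K] [NumberField K]
    (a : Ideal (𝓞 K)) (ha : a ≠ 0) (k : ℕ) (hk : 0 < k)
    (b : Ideal (𝓞 K))
    (hb : (b : FractionalIdeal (𝓞 K)⁰ K) =
      spanSingleton (𝓞 K)⁰ (k : K) * (a : FractionalIdeal (𝓞 K)⁰ K)⁻¹)
    (α : 𝓞 K)
    (hαbd : T2 K (algebraMap (𝓞 K) K α) ≤
      Real.sqrt (Module.finrank ℚ K) * (2 : ℝ) ^ ((Module.finrank ℚ K : ℝ) / 2) *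
        |(NumberField.discr K : ℝ)| ^ ((1 : ℝ) / (2 * Module.finrank ℚ K)) *
        (Ideal.absNorm b : ℝ) ^ ((1 : ℝ) / (Module.finrank ℚ K)))
    (a' : Ideal (𝓞 K))
    (ha' : (a' : FractionalIdeal (𝓞 K)⁰ K) =
      spanSingleton (𝓞 K)⁰ (algebraMap (𝓞 K) K α / (k : K)) *
        (a : FractionalIdeal (𝓞 K)⁰ K)) :
    (Ideal.absNorm a' : ℝ) ≤
      (2 : ℝ) ^ (((Module.finrank ℚ K : ℝ) ^ 2) / 2) *
        Real.sqrt |(NumberField.discr K : ℝ)| := by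
  set d := Module.finrank ℚ K
  have hd : (0 : ℝ) < √d := Real.sqrt_pos.mpr (by exact_mod_cast Module.finrank_pos)
  have ha0 : (a : FractionalIdeal (𝓞 K)⁰ K) ≠ 0 := coeIdeal_ne_zero.mpr ha
  have hk0 : (k : K) ≠ 0 := Nat.cast_ne_zero.mpr hk.ne'
  have hb0 : (b : FractionalIdeal (𝓞 K)⁰ K) ≠ 0 := by
    rw [hb]
    exact mul_ne_zero (spanSingleton_ne_zero_iff.mpr hk0) (inv_ne_zero ha0)
  have hNb : (0 : ℝ) < Ideal.absNorm b := by
    exact_mod_cast Nat.pos_of_ne_zero (Ideal.absNorm_ne_zero_of_nonZeroDivisors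
      ⟨b, mem_nonZeroDivisors_of_ne_zero (coeIdeal_ne_zero.mp hb0)⟩)
  have hnorm : (Ideal.absNorm a' : ℝ) * Ideal.absNorm b =
      |(Algebra.norm ℚ (algebraMap (𝓞 K) K α) : ℝ)| := by
    exact_mod_cast Ideal.absNorm_mul_absNorm_eq_abs_algebraNorm (by
      rw [ha', hb, spanSingleton_div_mul_mul_spanSingleton_mul_inv ha0 hk0])
  refine le_of_mul_le_mul_right ?_ hNb
  calc (Ideal.absNorm a' : ℝ) * Ideal.absNorm b
      ≤ (T2 K (algebraMap (𝓞 K) K α) / √d) ^ d :=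
        hnorm ▸ abs_algebraNorm_le_T2_div_sqrt_pow K _
    _ ≤ ((2 : ℝ) ^ ((d : ℝ) / 2) * |(discr K : ℝ)| ^ ((1 : ℝ) / (2 * d)) *
          (Ideal.absNorm b : ℝ) ^ ((1 : ℝ) / d)) ^ d := by
        gcongr
        · exact div_nonneg (T2_nonneg K _) hd.le
        · rw [div_le_iff₀' hd, ← mul_assoc, ← mul_assoc]; exact hαbd
    _ = _ := rpow_div_two_mul_rpow_one_div_mul_rpow_one_div_pow Module.finrank_pos.ne'
          (abs_nonneg _) hNb.le

/-- The normalization bound: if `a` is a nonzero integral ideal, `k` the denominator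
of `a⁻¹`, `b = k·a⁻¹ ⊆ 𝓞 K`, and `α ∈ b` nonzero with
`‖α‖ ≤ √d · 2^(d/2) · |Δ_K|^(1/2d) · N(b)^(1/d)`, then the integral ideal
`a' = (α/k)·a` satisfies `N(a') ≤ 2^(d²/2) · √|Δ_K|`. -/
theorem stmt_18 (K : Type*) [Field K] [NumberField K]
    (a : Ideal (𝓞 K)) (ha : a ≠ 0) (k : ℕ) (hk : 0 < k)
    (hint : spanSingleton (𝓞 K)⁰ (k : K) * (a : FractionalIdeal (𝓞 K)⁰ K)⁻¹ ≤ 1)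
    (hmin : ∀ m : ℕ, 0 < m →
      spanSingleton (𝓞 K)⁰ (m : K) * (a : FractionalIdeal (𝓞 K)⁰ K)⁻¹ ≤ 1 → k ≤ m)
    (b : Ideal (𝓞 K))
    (hb : (b : FractionalIdeal (𝓞 K)⁰ K) =
      spanSingleton (𝓞 K)⁰ (k : K) * (a : FractionalIdeal (𝓞 K)⁰ K)⁻¹)
    (α : 𝓞 K) (hα : α ∈ b) (hα0 : α ≠ 0)
    (hαbd : T2 K (algebraMap (𝓞 K) K α) ≤
      Real.sqrt (Module.finrank ℚ K) * (2 : ℝ) ^ ((Module.finrank ℚ K : ℝ) / 2) *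
        |(NumberField.discr K : ℝ)| ^ ((1 : ℝ) / (2 * Module.finrank ℚ K)) *
        (Ideal.absNorm b : ℝ) ^ ((1 : ℝ) / (Module.finrank ℚ K)))
    (a' : Ideal (𝓞 K))
    (ha' : (a' : FractionalIdeal (𝓞 K)⁰ K) =
      spanSingleton (𝓞 K)⁰ (algebraMap (𝓞 K) K α / (k : K)) *
        (a : FractionalIdeal (𝓞 K)⁰ K)) :
    (Ideal.absNorm a' : ℝ) ≤
      (2 : ℝ) ^ (((Module.finrank ℚ K : ℝ) ^ 2) / 2) *
        Real.sqrt |(NumberField.discr K : ℝ)| :=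
  stmt_18_general K a ha k hk b hb α hαbd a' ha'
end
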